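/- Fix σ, σ' > 0 and χ ≠ 0, and set P(χ, σ, σ') = (√(χ²σ²σ'² + 1/4) - 1/2)/(χσσ'). Then P(χ, σ, σ') ∈ (-1, 1), it has the same sign as χ, and Ξ(P(χ, σ, σ'), σ, σ') = χ; i.e., P(·, σ, σ') is the inverse of the strictly increasing map ρ ↦ Ξ(ρ, σ, σ') on (-1,1) \ {0}. -/
import Mathlib


/-- The optimality coefficient `Ξ(ρ, σ, σ') = ρ / (σσ'(1 - ρ²))`. -/
noncomputable def Xi (ρ σ σ' : ℝ) : ℝ := ρ / (σ * σ' * (1 - ρ ^ 2))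

/-- The inverse map `P(χ, σ, σ') = (√(χ²σ²σ'² + 1/4) - 1/2)/(χσσ')`. -/
noncomputable def Pfun (χ σ σ' : ℝ) : ℝ :=
  (Real.sqrt (χ ^ 2 * σ ^ 2 * σ' ^ 2 + 1 / 4) - 1 / 2) / (χ * σ * σ')

/-- For `σ, σ' > 0` and `χ ≠ 0`, the value `P(χ, σ, σ')` lies in `(-1, 1)`,
has the same sign as `χ`, and satisfies `Ξ(P(χ, σ, σ'), σ, σ') = χ`; i.e. `P(·, σ, σ')`
inverts the strictly increasing map `ρ ↦ Ξ(ρ, σ, σ')`. -/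
theorem Pfun_inverse_of_Xi (σ σ' χ : ℝ) (hσ : 0 < σ) (hσ' : 0 < σ') (hχ : χ ≠ 0) :
    Pfun χ σ σ' ∈ Set.Ioo (-1 : ℝ) 1 ∧
    (0 < χ → 0 < Pfun χ σ σ') ∧ (χ < 0 → Pfun χ σ σ' < 0) ∧
    Xi (Pfun χ σ σ') σ σ' = χ := by
  set t : ℝ := χ * σ * σ' with ht
  have ht0 : t ≠ 0 := by positivity
  set s : ℝ := Real.sqrt (χ ^ 2 * σ ^ 2 * σ' ^ 2 + 1 / 4) with hsdef
  have hs2 : s ^ 2 = t ^ 2 + 1 / 4 := by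
    rw [hsdef, Real.sq_sqrt (by positivity)]; ring
  have hs0 : 0 ≤ s := Real.sqrt_nonneg _
  have ht2 : 0 < t ^ 2 := by positivity
  have hsgt : 1 / 2 < s := by nlinarith
  set N : ℝ := s - 1 / 2 with hN
  have hNpos : 0 < N := by rw [hN]; linarith
  have hkey : t ^ 2 - N ^ 2 = N := by rw [hN]; linear_combination -hs2
  have hNlt : N < |t| := by
    nlinarith [abs_nonneg t, sq_abs t]
  have hP : Pfun χ σ σ' = N / t := by
    rw [Pfun]
  have habs : |N / t| < 1 := by
    rw [abs_div, abs_of_pos hNpos, div_lt_one (abs_pos.mpr ht0)]; exact hNlt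
  have hmem : Pfun χ σ σ' ∈ Set.Ioo (-1 : ℝ) 1 := by
    rw [hP, Set.mem_Ioo]
    constructor
    · linarith [neg_abs_le (N / t), habs]
    · linarith [le_abs_self (N / t)]
  refine ⟨hmem, ?_, ?_, ?_⟩
  · intro hχp
    rw [hP]
    exact div_pos hNpos (mul_pos (mul_pos hχp hσ) hσ')
  · intro hχn
    rw [hP]
    have htneg : t < 0 := by
      have : 0 < (-χ) * σ * σ' := mul_pos (mul_pos (neg_pos.mpr hχn) hσ) hσ'
      rw [ht]; nlinarith
    exact div_neg_of_pos_of_neg hNpos htneg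
  · rw [Xi, hP]
    have h1 : (1 : ℝ) - (N / t) ^ 2 = N / t ^ 2 := by
      field_simp
      linarith [hkey]
    rw [h1]
    have hσσ' : σ * σ' ≠ 0 := ne_of_gt (mul_pos hσ hσ')
    field_simp
    rw [ht]; ring
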